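/- Fix an integer R ≥ 2 and a power grid instance (G, u, x) with G connected, together with a supply–demand vector β summing to 0. Let f̂ = f̂(G, β) be the unique flow for β, let γ₁ < … < γ_p be the critical points (the distinct elements of { u e / |f̂ e| : f̂ e ≠ 0 }), for 1 ≤ h ≤ p let F^h = { e : γ_h·|f̂ e| = u e }, and for 0 ≤ j ≤ p let 𝒦(j) denote the set of connected components of G with the lines ⋃_{h=1}^{j} F^h removed. Then for every t > 0, setting q = max{ h : γ_h < t } (with q = 0 if no critical point is below t), the optimal yield satisfies the consolidated recursion: Θ_G^{(R)}(t | β) = max{ max over 1 ≤ i ≤ q of ∑_{H ∈ 𝒦(i−1)} Θ_H^{(R−1)}(γ_i | β^H), ∑_{H ∈ 𝒦(q)} Θ_H^{(R−1)}(t | β^H) }, where β^H denotes the rebalanced supply–demand vector of component H. -/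
import Mathlib


open scoped Classical

noncomputable section

/-- Two buses are connected in the subgraph with line set `H`. -/
def conn {V E : Type*} (tail head : E → V) (H : Finset E) (a b : V) : Prop :=
  Relation.EqvGen (fun s t => ∃ e ∈ H, tail e = s ∧ head e = t) a b

/-- The (vertex set of the) connected component of `v` in the subgraph with
line set `H`. -/
def compOf {V E : Type*} [Fintype V] (tail head : E → V) (H : Finset E) (v : V) :
    Finset V :=
  Finset.univ.filter (fun w => conn tail head H v w)

/-- `(f, φ)` solves the linearized power flow equations on the subgraph with
line set `H` for the supply–demand vector `μ`. -/
def IsSol {V E : Type*} (tail head : E → V) (x : E → ℝ) (H : Finset E)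
    (μ : V → ℝ) (f : E → ℝ) (φ : V → ℝ) : Prop :=
  (∀ v : V, (∑ e ∈ H.filter (fun e => tail e = v), f e)
      - (∑ e ∈ H.filter (fun e => head e = v), f e) = μ v) ∧
  (∀ e ∈ H, φ (tail e) - φ (head e) - x e * f e = 0)

/-- The (unique) flow vector on the subgraph with line set `H` for the
supply–demand vector `μ`, obtained by choice (and `0` if no solution exists). -/
def flowHat {V E : Type*} (tail head : E → V) (x : E → ℝ) (H : Finset E)
    (μ : V → ℝ) : E → ℝ :=
  if h : ∃ q : (E → ℝ) × (V → ℝ), IsSol tail head x H μ q.1 q.2 ∧ ∀ e ∉ H, q.1 e = 0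
  then h.choose.1 else 0

/-- Total demand `D̃(μ)`. -/
def Dtot {V : Type*} [Fintype V] (μ : V → ℝ) : ℝ :=
  ∑ v ∈ Finset.univ.filter (fun v => μ v < 0), (-μ v)

/-- Total supply `S(μ)`. -/
def Stot {V : Type*} [Fintype V] (μ : V → ℝ) : ℝ :=
  ∑ v ∈ Finset.univ.filter (fun v => 0 < μ v), μ v

/-- Maximum load `ψ(H, μ) = max_{e ∈ H} |f̂(H, μ) e| / u e` (`0` if `H` has no
lines). -/
def psi {V E : Type*} (tail head : E → V) (x u : E → ℝ) (H : Finset E)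
    (μ : V → ℝ) : ℝ :=
  if h : H.Nonempty then H.sup' h (fun e => |flowHat tail head x H μ e| / u e) else 0

/-- The set of lines of `H` outaged at scale `s`. -/
def outaged {V E : Type*} (tail head : E → V) (x u : E → ℝ) (H : Finset E)
    (μ : V → ℝ) (s : ℝ) : Finset E :=
  H.filter (fun e => u e < s * |flowHat tail head x H μ e|)

/-- The vertex sets of the connected components of the subgraph with line set `H`. -/
def comps {V E : Type*} [Fintype V] (tail head : E → V) (H : Finset E) :
    Finset (Finset V) :=
  Finset.univ.image (compOf tail head H)

/-- The lines of `H` with both endpoints in the vertex set `C`. -/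
def linesIn {V E : Type*} (tail head : E → V) (H : Finset E) (C : Finset V) :
    Finset E :=
  H.filter (fun e => tail e ∈ C ∧ head e ∈ C)

/-- Restriction of a supply–demand vector to a vertex set. -/
def restrict {V : Type*} (μ : V → ℝ) (C : Finset V) : V → ℝ := fun v =>
  if v ∈ C then μ v else 0

/-- The rebalanced supply–demand vector: demands are scaled by
(total supply)/(total demand) if demand exceeds supply, and otherwise supplies
are scaled by (total demand)/(total supply). -/
def rebal {V : Type*} [Fintype V] (μ : V → ℝ) : V → ℝ := fun v =>
  if Stot μ < Dtot μ then (if μ v < 0 then (Stot μ / Dtot μ) * μ v else μ v)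
  else (if 0 < μ v then (Dtot μ / Stot μ) * μ v else μ v)

/-- The optimal yield function: `Theta tail head x u n H μ t` is
`Θ_H^{(n+1)}(t | μ)`.  The base case `n = 0` is the termination round
`Θ^{(1)}(t | μ) = min(t, 1/ψ)·D̃(μ)` (with `t·D̃(μ)` when `ψ = 0`); the
recursive case takes the supremum over scaling multipliers `λ ∈ (0, 1]` of the
sum, over components of the network after outaging overloaded lines, of the
optimal yields of the rebalanced islands with one fewer round. -/
def Theta {V E : Type*} [Fintype V] [Fintype E] (tail head : E → V)
    (x u : E → ℝ) : ℕ → Finset E → (V → ℝ) → ℝ → ℝ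
  | 0, H, μ, t =>
      if psi tail head x u H μ = 0 then t * Dtot μ
      else min t (psi tail head x u H μ)⁻¹ * Dtot μ
  | (n + 1), H, μ, t =>
      sSup ((fun l : ℝ =>
        ∑ C ∈ comps tail head (H \ outaged tail head x u H μ (l * t)),
          Theta tail head x u n
            (linesIn tail head (H \ outaged tail head x u H μ (l * t)) C)
            (rebal (restrict μ C)) (l * t)) '' Set.Ioc (0 : ℝ) 1)

/-- `Fcup tail head x u β γ j` is `⋃_{h=1}^{j} F^h`, where
`F^h = {e : γ_h·|f̂ e| = u e}`. -/
def Fcup {V E : Type*} [Fintype E] (tail head : E → V) (x u : E → ℝ)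
    (β : V → ℝ) (γ : ℕ → ℝ) (j : ℕ) : Finset E :=
  Finset.univ.filter
    (fun e => ∃ h : ℕ, 1 ≤ h ∧ h ≤ j ∧
      γ h * |flowHat tail head x Finset.univ β e| = u e)

section AuxLemmas

variable {V E : Type*} [Fintype V] [Fintype E] (tail head : E → V) (x u : E → ℝ)

lemma Dtot_nonneg (μ : V → ℝ) : 0 ≤ Dtot μ :=
  Finset.sum_nonneg fun v hv => by
    simp only [Finset.mem_filter] at hv; linarith [hv.2]

lemma Stot_nonneg (μ : V → ℝ) : 0 ≤ Stot μ :=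
  Finset.sum_nonneg fun v hv => by
    simp only [Finset.mem_filter] at hv; linarith [hv.2]

lemma Dtot_le_sum_abs (μ : V → ℝ) : Dtot μ ≤ ∑ v, |μ v| := by
  refine le_trans (Finset.sum_le_sum fun v _ => neg_le_abs (μ v))
    (Finset.sum_le_sum_of_subset_of_nonneg (Finset.subset_univ _)
      fun v _ _ => abs_nonneg _)

lemma abs_rebal_le (μ : V → ℝ) (v : V) : |rebal μ v| ≤ |μ v| := by
  unfold rebal
  split_ifs with h1 h2 h3
  · have hD : 0 < Dtot μ := lt_of_le_of_lt (Stot_nonneg μ) h1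
    have hc0 : 0 ≤ Stot μ / Dtot μ := div_nonneg (Stot_nonneg μ) hD.le
    have hc1 : Stot μ / Dtot μ ≤ 1 := (div_le_one hD).2 h1.le
    rw [abs_mul, abs_of_nonneg hc0]
    nlinarith [abs_nonneg (μ v)]
  · exact le_refl _
  · have hS : 0 < Stot μ := by
      have : μ v ≤ Stot μ :=
        Finset.single_le_sum (f := μ)
          (fun i hi => le_of_lt (Finset.mem_filter.mp hi).2)
          (Finset.mem_filter.mpr ⟨Finset.mem_univ v, h3⟩)
      linarith
    have hc0 : 0 ≤ Dtot μ / Stot μ := div_nonneg (Dtot_nonneg μ) hS.le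
    have hc1 : Dtot μ / Stot μ ≤ 1 := (div_le_one hS).2 (not_lt.mp h1)
    rw [abs_mul, abs_of_nonneg hc0]
    nlinarith [abs_nonneg (μ v)]
  · exact le_refl _

lemma sum_abs_restrict (μ : V → ℝ) (C : Finset V) :
    ∑ v, |restrict μ C v| = ∑ v ∈ C, |μ v| := by
  unfold restrict
  rw [← Finset.sum_filter_add_sum_filter_not Finset.univ (fun v => v ∈ C)]
  have h1 : ∑ v ∈ Finset.univ.filter (fun v => v ∈ C),
      |if v ∈ C then μ v else 0| = ∑ v ∈ C, |μ v| := by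
    rw [Finset.filter_mem_eq_inter, Finset.univ_inter]
    exact Finset.sum_congr rfl fun v hv => by rw [if_pos hv]
  have h2 : ∑ v ∈ Finset.univ.filter (fun v => ¬ v ∈ C),
      |if v ∈ C then μ v else 0| = 0 := by
    refine Finset.sum_eq_zero fun v hv => ?_
    rw [if_neg (Finset.mem_filter.mp hv).2, abs_zero]
  rw [h1, h2, add_zero]

lemma compOf_eq_of_mem {H : Finset E} {a b w : V}
    (ha : w ∈ compOf tail head H a) (hb : w ∈ compOf tail head H b) :
    compOf tail head H a = compOf tail head H b := by
  simp only [compOf, Finset.mem_filter, Finset.mem_univ, true_and] at ha hb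
  ext z
  simp only [compOf, Finset.mem_filter, Finset.mem_univ, true_and]
  constructor
  · intro hz
    exact Relation.EqvGen.trans _ _ _ hb
      (Relation.EqvGen.trans _ _ _ (Relation.EqvGen.symm _ _ ha) hz)
  · intro hz
    exact Relation.EqvGen.trans _ _ _ ha
      (Relation.EqvGen.trans _ _ _ (Relation.EqvGen.symm _ _ hb) hz)

lemma sum_comps_le (K : Finset E) (g : V → ℝ) (hg : ∀ v, 0 ≤ g v) :
    ∑ C ∈ comps tail head K, ∑ v ∈ C, g v ≤ ∑ v, g v := by
  have hdisj : (comps tail head K : Set (Finset V)).PairwiseDisjoint id := by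
    intro C hC D hD hne
    simp only [comps, Finset.coe_image, Set.mem_image] at hC hD
    obtain ⟨a, _, rfl⟩ := hC
    obtain ⟨b, _, rfl⟩ := hD
    simp only [Function.onFun, id]
    rw [Finset.disjoint_left]
    intro w hw hw'
    exact hne (compOf_eq_of_mem tail head hw hw')
  refine le_trans (le_of_eq ?_) (Finset.sum_le_sum_of_subset_of_nonneg
    (Finset.subset_univ ((comps tail head K).biUnion id)) fun v _ _ => hg v)
  exact (Finset.sum_biUnion hdisj).symm

lemma theta_le_bound :
    ∀ (n : ℕ) (H : Finset E) (μ : V → ℝ) (t : ℝ), 0 < t →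
      Theta tail head x u n H μ t ≤ t * ∑ v, |μ v| := by
  intro n
  induction n with
  | zero =>
    intro H μ t ht
    have hD : Dtot μ ≤ ∑ v, |μ v| := Dtot_le_sum_abs μ
    by_cases h : psi tail head x u H μ = 0
    · simp only [Theta, h, if_pos]
      exact mul_le_mul_of_nonneg_left hD ht.le
    · simp only [Theta, h, if_neg, if_false]
      calc min t (psi tail head x u H μ)⁻¹ * Dtot μ
          ≤ t * Dtot μ :=
            mul_le_mul_of_nonneg_right (min_le_left _ _) (Dtot_nonneg μ)
        _ ≤ t * ∑ v, |μ v| := mul_le_mul_of_nonneg_left hD ht.le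
  | succ n ih =>
    intro H μ t ht
    show sSup _ ≤ _
    refine csSup_le ((Set.nonempty_Ioc.mpr zero_lt_one).image _) ?_
    rintro y ⟨l, hl, rfl⟩
    have hlt : 0 < l * t := mul_pos hl.1 ht
    calc ∑ C ∈ comps tail head (H \ outaged tail head x u H μ (l * t)),
          Theta tail head x u n
            (linesIn tail head (H \ outaged tail head x u H μ (l * t)) C)
            (rebal (restrict μ C)) (l * t)
        ≤ ∑ C ∈ comps tail head (H \ outaged tail head x u H μ (l * t)),
            (l * t) * ∑ v ∈ C, |μ v| := by
          refine Finset.sum_le_sum fun C _ => ?_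
          refine le_trans (ih _ _ _ hlt) ?_
          refine mul_le_mul_of_nonneg_left ?_ hlt.le
          rw [← sum_abs_restrict μ C]
          exact Finset.sum_le_sum fun v _ => abs_rebal_le _ _
      _ = (l * t) * ∑ C ∈ comps tail head (H \ outaged tail head x u H μ (l * t)),
            ∑ v ∈ C, |μ v| := (Finset.mul_sum _ _ _).symm
      _ ≤ (l * t) * ∑ v, |μ v| :=
          mul_le_mul_of_nonneg_left
            (sum_comps_le tail head _ _ fun v => abs_nonneg _) hlt.le
      _ ≤ t * ∑ v, |μ v| := by
          refine mul_le_mul_of_nonneg_right ?_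
            (Finset.sum_nonneg fun v _ => abs_nonneg _)
          nlinarith [hl.2]

lemma sum_theta_le (n : ℕ) (K : Finset E) (μ : V → ℝ) {s : ℝ} (hs : 0 < s) :
    ∑ C ∈ comps tail head K,
      Theta tail head x u n (linesIn tail head K C) (rebal (restrict μ C)) s
      ≤ s * ∑ v, |μ v| := by
  calc ∑ C ∈ comps tail head K,
        Theta tail head x u n (linesIn tail head K C) (rebal (restrict μ C)) s
      ≤ ∑ C ∈ comps tail head K, s * ∑ v ∈ C, |μ v| := by
        refine Finset.sum_le_sum fun C _ => ?_
        refine le_trans (theta_le_bound tail head x u n _ _ s hs) ?_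
        refine mul_le_mul_of_nonneg_left ?_ hs.le
        rw [← sum_abs_restrict μ C]
        exact Finset.sum_le_sum fun v _ => abs_rebal_le _ _
    _ = s * ∑ C ∈ comps tail head K, ∑ v ∈ C, |μ v| := (Finset.mul_sum _ _ _).symm
    _ ≤ s * ∑ v, |μ v| :=
        mul_le_mul_of_nonneg_left
          (sum_comps_le tail head _ _ fun v => abs_nonneg _) hs.le

lemma theta_mono (n : ℕ) (H : Finset E) (μ : V → ℝ) {s t : ℝ}
    (hs : 0 < s) (hst : s ≤ t) :
    Theta tail head x u n H μ s ≤ Theta tail head x u n H μ t := by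
  have ht : 0 < t := lt_of_lt_of_le hs hst
  cases n with
  | zero =>
    by_cases h : psi tail head x u H μ = 0
    · simp only [Theta, h, if_pos]
      exact mul_le_mul_of_nonneg_right hst (Dtot_nonneg μ)
    · simp only [Theta, h, if_neg, if_false]
      exact mul_le_mul_of_nonneg_right (min_le_min_right _ hst) (Dtot_nonneg μ)
  | succ n =>
    show sSup _ ≤ sSup _
    refine csSup_le_csSup ?_ ((Set.nonempty_Ioc.mpr zero_lt_one).image _) ?_
    · refine ⟨t * ∑ v, |μ v|, ?_⟩
      rintro y ⟨l, hl, rfl⟩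
      have hlt : 0 < l * t := mul_pos hl.1 ht
      refine le_trans (sum_theta_le tail head x u n _ μ hlt) ?_
      refine mul_le_mul_of_nonneg_right ?_
        (Finset.sum_nonneg fun v _ => abs_nonneg _)
      nlinarith [hl.2]
    · rintro y ⟨l, hl, rfl⟩
      refine ⟨l * s / t, ⟨div_pos (mul_pos hl.1 hs) ht, ?_⟩, ?_⟩
      · rw [div_le_one ht]
        nlinarith [hl.1, hl.2]
      · have : l * s / t * t = l * s := div_mul_cancel₀ _ ht.ne'
        simp only [this]

lemma outaged_eq_Fcup (hu : ∀ e, 0 < u e) (β : V → ℝ) (p : ℕ) (γ : ℕ → ℝ)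
    (hcrit : {c : ℝ | ∃ e : E, flowHat tail head x Finset.univ β e ≠ 0 ∧
        c = u e / |flowHat tail head x Finset.univ β e|}
      = {c : ℝ | ∃ h : ℕ, 1 ≤ h ∧ h ≤ p ∧ c = γ h})
    (j : ℕ) (hj : j ≤ p) (s : ℝ)
    (hjs : ∀ h : ℕ, 1 ≤ h → h ≤ p → (γ h < s ↔ h ≤ j)) :
    outaged tail head x u Finset.univ β s = Fcup tail head x u β γ j := by
  ext e
  simp only [outaged, Fcup, Finset.mem_filter, Finset.mem_univ, true_and]
  by_cases hf : flowHat tail head x Finset.univ β e = 0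
  · rw [hf]
    simp only [abs_zero, mul_zero]
    constructor
    · intro h; linarith [hu e]
    · rintro ⟨h, _, _, heq⟩; linarith [hu e]
  · have hfe : 0 < |flowHat tail head x Finset.univ β e| := abs_pos.mpr hf
    obtain ⟨h0, h01, h0p, hch⟩ :=
      (Set.ext_iff.mp hcrit (u e / |flowHat tail head x Finset.univ β e|)).mp
        ⟨e, hf, rfl⟩
    constructor
    · intro hlt
      have hc : γ h0 < s := by
        rw [← hch, div_lt_iff₀ hfe]
        linarith
      refine ⟨h0, h01, (hjs h0 h01 h0p).1 hc, ?_⟩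
      rw [← hch, div_mul_cancel₀ _ hfe.ne']
    · rintro ⟨h, h1, hjle, heq⟩
      have hs' : γ h < s := (hjs h h1 (hjle.trans hj)).2 hjle
      calc u e = γ h * |flowHat tail head x Finset.univ β e| := heq.symm
        _ < s * |flowHat tail head x Finset.univ β e| :=
            mul_lt_mul_of_pos_right hs' hfe

end AuxLemmas

/-- The consolidated recursion: for `G` connected, `β` summing to `0`,
critical points `γ₁ < … < γ_p`, `t > 0` and `q = max{h : γ_h < t}`,
`Θ_G^{(R)}(t | β)` equals the maximum of the values
`∑_{H ∈ 𝒦(i−1)} Θ_H^{(R−1)}(γ_i | β^H)` for `1 ≤ i ≤ q` and of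
`∑_{H ∈ 𝒦(q)} Θ_H^{(R−1)}(t | β^H)`. -/
theorem theta_consolidated {V E : Type*} [Fintype V] [Fintype E]
    (tail head : E → V) (x u : E → ℝ)
    (hx : ∀ e, 0 < x e) (hu : ∀ e, 0 < u e)
    (R : ℕ) (hR : 2 ≤ R)
    (β : V → ℝ) (hβ : ∑ v, β v = 0)
    (hconn : ∀ a b : V, conn tail head Finset.univ a b)
    (p : ℕ) (γ : ℕ → ℝ)
    (hpos : ∀ h : ℕ, 1 ≤ h → h ≤ p → 0 < γ h)
    (hmono : ∀ i j : ℕ, 1 ≤ i → i < j → j ≤ p → γ i < γ j)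
    (hcrit : {c : ℝ | ∃ e : E, flowHat tail head x Finset.univ β e ≠ 0 ∧
        c = u e / |flowHat tail head x Finset.univ β e|}
      = {c : ℝ | ∃ h : ℕ, 1 ≤ h ∧ h ≤ p ∧ c = γ h})
    (t : ℝ) (ht : 0 < t)
    (q : ℕ) (hqp : q ≤ p)
    (hq : ∀ h : ℕ, 1 ≤ h → h ≤ p → (γ h < t ↔ h ≤ q)) :
    Theta tail head x u (R - 1) Finset.univ β t =
      sSup (insert
        (∑ C ∈ comps tail head (Finset.univ \ Fcup tail head x u β γ q),
          Theta tail head x u (R - 2)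
            (linesIn tail head (Finset.univ \ Fcup tail head x u β γ q) C)
            (rebal (restrict β C)) t)
        {y : ℝ | ∃ i : ℕ, 1 ≤ i ∧ i ≤ q ∧
          y = ∑ C ∈ comps tail head
                (Finset.univ \ Fcup tail head x u β γ (i - 1)),
              Theta tail head x u (R - 2)
                (linesIn tail head
                  (Finset.univ \ Fcup tail head x u β γ (i - 1)) C)
                (rebal (restrict β C)) (γ i)}) := by
  obtain ⟨k, rfl⟩ : ∃ k, R = k + 2 := ⟨R - 2, by omega⟩
  simp only [show k + 2 - 1 = k + 1 from rfl, show k + 2 - 2 = k from rfl]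
  have hγlt : ∀ i, 1 ≤ i → i ≤ q → γ i < t := fun i h1 hiq =>
    (hq i h1 (hiq.trans hqp)).2 hiq
  have houtq : outaged tail head x u Finset.univ β t = Fcup tail head x u β γ q :=
    outaged_eq_Fcup tail head x u hu β p γ hcrit q hqp t hq
  have houtγ : ∀ i, 1 ≤ i → i ≤ q →
      outaged tail head x u Finset.univ β (γ i) = Fcup tail head x u β γ (i - 1) := by
    intro i h1 hiq
    refine outaged_eq_Fcup tail head x u hu β p γ hcrit (i - 1) (by omega) (γ i) ?_
    intro h hh1 hhp
    constructor
    · intro hlt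
      by_contra hcon
      have hih : i ≤ h := by omega
      rcases eq_or_lt_of_le hih with rfl | hlt2
      · exact lt_irrefl _ hlt
      · exact absurd (hmono i h h1 hlt2 hhp) (by linarith)
    · intro hh
      exact hmono h i hh1 (by omega) (hiq.trans hqp)
  simp only [Theta]
  have bddL : BddAbove ((fun l : ℝ =>
      ∑ C ∈ comps tail head
        (Finset.univ \ outaged tail head x u Finset.univ β (l * t)),
        Theta tail head x u k
          (linesIn tail head
            (Finset.univ \ outaged tail head x u Finset.univ β (l * t)) C)
          (rebal (restrict β C)) (l * t)) '' Set.Ioc (0 : ℝ) 1) := by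
    refine ⟨t * ∑ v, |β v|, ?_⟩
    rintro y ⟨l, hl, rfl⟩
    have hlt : 0 < l * t := mul_pos hl.1 ht
    refine le_trans (sum_theta_le tail head x u k _ β hlt) ?_
    refine mul_le_mul_of_nonneg_right ?_ (Finset.sum_nonneg fun v _ => abs_nonneg _)
    nlinarith [hl.2]
  have hsub : (insert
      (∑ C ∈ comps tail head (Finset.univ \ Fcup tail head x u β γ q),
        Theta tail head x u k
          (linesIn tail head (Finset.univ \ Fcup tail head x u β γ q) C)
          (rebal (restrict β C)) t)
      {y : ℝ | ∃ i : ℕ, 1 ≤ i ∧ i ≤ q ∧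
        y = ∑ C ∈ comps tail head
              (Finset.univ \ Fcup tail head x u β γ (i - 1)),
            Theta tail head x u k
              (linesIn tail head
                (Finset.univ \ Fcup tail head x u β γ (i - 1)) C)
              (rebal (restrict β C)) (γ i)}) ⊆
      ((fun l : ℝ =>
      ∑ C ∈ comps tail head
        (Finset.univ \ outaged tail head x u Finset.univ β (l * t)),
        Theta tail head x u k
          (linesIn tail head
            (Finset.univ \ outaged tail head x u Finset.univ β (l * t)) C)
          (rebal (restrict β C)) (l * t)) '' Set.Ioc (0 : ℝ) 1) := by
    rintro y hy
    rcases hy with rfl | ⟨i, h1, hiq, rfl⟩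
    · refine ⟨1, Set.mem_Ioc.mpr ⟨zero_lt_one, le_refl 1⟩, ?_⟩
      simp only [one_mul, houtq]
    · refine ⟨γ i / t, Set.mem_Ioc.mpr ⟨div_pos (hpos i h1 (hiq.trans hqp)) ht,
        (div_le_one ht).2 (hγlt i h1 hiq).le⟩, ?_⟩
      simp only [div_mul_cancel₀ _ ht.ne', houtγ i h1 hiq]
  have bddR := bddL.mono hsub
  refine le_antisymm ?_
    (csSup_le_csSup bddL ⟨_, Set.mem_insert _ _⟩ hsub)
  refine csSup_le ((Set.nonempty_Ioc.mpr zero_lt_one).image _) ?_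
  rintro y ⟨l, hl, rfl⟩
  have hs : 0 < l * t := mul_pos hl.1 ht
  have hstt : l * t ≤ t := by nlinarith [hl.2]
  dsimp only
  by_cases hex : ∃ i, 1 ≤ i ∧ i ≤ q ∧ l * t ≤ γ i
  · obtain ⟨hi1, hiq, hsγ⟩ := Nat.find_spec hex
    set i := Nat.find hex with hidef
    have hmin : ∀ m, m < i → ¬(1 ≤ m ∧ m ≤ q ∧ l * t ≤ γ m) := fun m hm =>
      Nat.find_min hex hm
    have hout : outaged tail head x u Finset.univ β (l * t) =
        Fcup tail head x u β γ (i - 1) := by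
      refine outaged_eq_Fcup tail head x u hu β p γ hcrit (i - 1) (by omega) _ ?_
      intro h hh1 hhp
      constructor
      · intro hlt2
        by_contra hcon
        have hih : i ≤ h := by omega
        by_cases hhq : h ≤ q
        · have hge : γ i ≤ γ h := by
            rcases eq_or_lt_of_le hih with rfl | hlt3
            · exact le_refl _
            · exact (hmono i h hi1 hlt3 hhp).le
          linarith
        · have hnt : ¬ γ h < t := fun hc => hhq ((hq h hh1 hhp).1 hc)
          push_neg at hnt
          linarith
      · intro hh
        have hm := hmin h (by omega)
        push_neg at hm
        exact hm hh1 (by omega)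
    rw [hout]
    refine le_trans (Finset.sum_le_sum fun C _ =>
      theta_mono tail head x u k _ _ hs hsγ) (le_csSup bddR ?_)
    exact Set.mem_insert_iff.mpr (Or.inr ⟨i, hi1, hiq, rfl⟩)
  · push_neg at hex
    have hout : outaged tail head x u Finset.univ β (l * t) =
        Fcup tail head x u β γ q := by
      refine outaged_eq_Fcup tail head x u hu β p γ hcrit q hqp _ ?_
      intro h hh1 hhp
      constructor
      · intro hlt2
        by_contra hcon
        have hnt : ¬ γ h < t := fun hc => hcon ((hq h hh1 hhp).1 hc)
        push_neg at hnt
        linarith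
      · intro hh
        exact hex h hh1 hh
    rw [hout]
    exact le_trans (Finset.sum_le_sum fun C _ =>
      theta_mono tail head x u k _ _ hs hstt) (le_csSup bddR (Set.mem_insert _ _))
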